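/- arXiv:2503.22369 — 2 statements merged into one kernel-verified Lean document; each statement's English description precedes it below -/
import Mathlib

section
/- For every z ∈ ℝ^m, S ⊆ {1,…,m} and s ∈ S, the closure of the conditional support 𝒳_s(z, S) is a finite union of closed (possibly unbounded) intervals; after merging overlapping intervals it can be written as a union of at most m(m+1)/2 + 1 pairwise disjoint intervals. Moreover, the closure of 𝒳_s(z, S) differs from 𝒳_s(z, S) itself by a set of Lebesgue measure zero. -/
/-!
Along the line `t ↦ Ω_{·,s} t + z` each statistic is affine, `x_h(t) = c_h t + w_h`, and the
step-down rule returns `S` exactly when no unselected `|x_h|` exceeds a selected `|x_a|`, every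
selected `|x_a|` reaches the threshold of the hypotheses still in play when it is tested, and
every unselected `|x_h|` stays below `x̄(Sᶜ)`. Each violation happens on an interval: where
`|x_a| < ±x_h`, where a block `T ⊆ S` stays below `x̄(T ∪ Sᶜ)` (an intersection of slabs, which
two of them `b, e` already cut out), or on a ray where `|x_h| ≥ x̄(Sᶜ)`. Two bounded intervals of
the first two kinds labelled by the same unordered pair `{a, h}` or `{b, e}` have an interval as
union, so the bounded gaps of `𝒳ₛ(z, S)` fall into at most `m(m+1)/2` classes. Counting the
classes lying left of `t` cuts `𝒳ₛ(z, S)` into at most `m(m+1)/2 + 1` intervals; their closures,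
merged into connected components, give the first claim, and an interval differs from its closure
by at most two points.
-/

open MeasureTheory ProbabilityTheory Filter

variable {m : ℕ}

/-- `l` enumerates all indices of `Fin m`, sorted in descending order of `key`. -/
def SortedEnum (key : Fin m → ℝ) (l : List (Fin m)) : Prop :=
  l.Nodup ∧ (∀ i : Fin m, i ∈ l) ∧ l.Pairwise fun i j => key j ≤ key i

/-- One pass of a step-down testing algorithm along a (sorted) list: at each step,
if the current statistic is below the threshold of the set of not-yet-rejected
hypotheses, stop; otherwise reject it and continue. -/
noncomputable def stepDownRun (xbar : Finset (Fin m) → ℝ) (key : Fin m → ℝ) :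
    List (Fin m) → Finset (Fin m)
  | [] => ∅
  | h :: t =>
      if key h < xbar (insert h t.toFinset) then ∅
      else insert h (stepDownRun xbar key t)

/-- The two-sided step-down procedure run on `x` returns exactly `S`. -/
def SelectsTwoSided (xbar : Finset (Fin m) → ℝ) (x : Fin m → ℝ) (S : Finset (Fin m)) : Prop :=
  ∃ l : List (Fin m), SortedEnum (fun i => |x i|) l ∧ stepDownRun xbar (fun i => |x i|) l = S

/-- Correlation matrix `Ω = diag(v)^{-1/2} V diag(v)^{-1/2}`. -/
noncomputable def corrMat (V : Matrix (Fin m) (Fin m) ℝ) : Matrix (Fin m) (Fin m) ℝ :=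
  Matrix.of fun h k => V h k / (Real.sqrt (V h h) * Real.sqrt (V k k))

/-- The conditional support `𝒳ₛ(z, S) = {x : Ω_{·,s} x + z ∈ 𝒳(S)}`. -/
def condSupport (xbar : Finset (Fin m) → ℝ) (V : Matrix (Fin m) (Fin m) ℝ)
    (z : Fin m → ℝ) (S : Finset (Fin m)) (s : Fin m) : Set ℝ :=
  {t : ℝ | SelectsTwoSided xbar (fun h => corrMat V h s * t + z h) S}

section StepDown

variable (xbar : Finset (Fin m) → ℝ) (key : Fin m → ℝ)

/-- The output `S` of the step-down procedure on the hypotheses `U`, described without reference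
to the order in which ties of `key` are enumerated. -/
def IsStepDownSelection (U S : Finset (Fin m)) : Prop :=
  S ⊆ U ∧ (∀ a ∈ S, ∀ h ∈ U \ S, key h ≤ key a) ∧
    (∀ a ∈ S, xbar ({b ∈ S | key b ≤ key a} ∪ (U \ S)) ≤ key a) ∧
    ∀ h ∈ U \ S, key h < xbar (U \ S)

variable {xbar key}

theorem isStepDownSelection_stepDownRun (hmono : Monotone xbar) {l : List (Fin m)}
    (hsorted : l.Pairwise fun i j => key j ≤ key i) (hnodup : l.Nodup) :
    IsStepDownSelection xbar key l.toFinset (stepDownRun xbar key l) := by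
  induction l with
  | nil => simp [IsStepDownSelection, stepDownRun]
  | cons a t ih =>
    obtain ⟨ha_max, hsorted⟩ := List.pairwise_cons.mp hsorted
    obtain ⟨ha_notMem, hnodup⟩ := List.nodup_cons.mp hnodup
    obtain ⟨hsub, h_order, h_pass, h_fail⟩ := ih hsorted hnodup
    have hkey : ∀ d ∈ insert a t.toFinset, key d ≤ key a := by
      simpa [or_imp, forall_and] using ha_max
    rw [stepDownRun, List.toFinset_cons]
    split_ifs with hstop
    · refine ⟨Finset.empty_subset _, by simp, by simp, fun h hh => ?_⟩
      rw [Finset.sdiff_empty] at hh ⊢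
      exact (hkey h hh).trans_lt hstop
    · have hrest : insert a t.toFinset \ insert a (stepDownRun xbar key t) =
          t.toFinset \ stepDownRun xbar key t := by
        rw [Finset.insert_sdiff_insert,
          Finset.sdiff_insert_of_notMem (by simpa using ha_notMem)]
      refine ⟨Finset.insert_subset_insert a hsub, ?_, fun b hb => ?_, by rwa [hrest]⟩
      · rw [hrest]
        intro b hb h hh
        rcases Finset.mem_insert.mp hb with rfl | hb
        · exact hkey h (Finset.mem_insert_of_mem (Finset.mem_sdiff.mp hh).1)
        · exact h_order b hb h hh
      · rw [hrest]
        by_cases htie : key a ≤ key b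
        · -- `b` ties with the head `a`, whose own test already bounds the threshold
          refine (hmono ?_).trans ((not_lt.mp hstop).trans htie)
          refine Finset.union_subset ((Finset.filter_subset _ _).trans
            (Finset.insert_subset_insert a hsub)) ?_
          exact Finset.sdiff_subset.trans (Finset.subset_insert a _)
        · have hb' : b ∈ stepDownRun xbar key t :=
            (Finset.mem_insert.mp hb).resolve_left (by rintro rfl; exact htie le_rfl)
          rw [Finset.filter_insert, if_neg htie]
          exact h_pass b hb'

theorem stepDownRun_append {l₁ l₂ : List (Fin m)} (h₂ : stepDownRun xbar key l₂ = ∅)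
    (h₁ : ∀ p a q, l₁ = p ++ a :: q → xbar (insert a (q ++ l₂).toFinset) ≤ key a) :
    stepDownRun xbar key (l₁ ++ l₂) = l₁.toFinset := by
  induction l₁ with
  | nil => simpa using h₂
  | cons a t ih =>
    rw [List.cons_append, stepDownRun, if_neg (not_lt.mpr (h₁ [] a t rfl)),
      ih fun p b q hpq => h₁ (a :: p) b q (by simp [hpq]), List.toFinset_cons]

theorem List.exists_nodup_pairwise_toFinset_eq {α β : Type*} [DecidableEq α] [LinearOrder β]
    (f : α → β) (A : Finset α) :
    ∃ l : List α, l.Nodup ∧ l.toFinset = A ∧ l.Pairwise fun i j => f j ≤ f i := by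
  refine ⟨A.toList.mergeSort fun i j => decide (f j ≤ f i),
    (List.mergeSort_perm _ _).nodup_iff.mpr A.nodup_toList,
    by ext; simp [List.mem_mergeSort], ?_⟩
  refine (List.pairwise_mergeSort (fun a b c hab hbc => ?_) (fun a b => ?_) _).imp (by simp)
  · simp only [decide_eq_true_eq] at *
    exact hbc.trans hab
  · simpa using le_total (f b) (f a)

theorem exists_sortedEnum_stepDownRun_eq_of_isStepDownSelection (hmono : Monotone xbar)
    {S : Finset (Fin m)} (hS : IsStepDownSelection xbar key Finset.univ S) :
    ∃ l, SortedEnum key l ∧ stepDownRun xbar key l = S := by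
  obtain ⟨-, h_order, h_pass, h_fail⟩ := hS
  obtain ⟨l₁, hnodup₁, hl₁, hsorted₁⟩ := List.exists_nodup_pairwise_toFinset_eq key S
  obtain ⟨l₂, hnodup₂, hl₂, hsorted₂⟩ :=
    List.exists_nodup_pairwise_toFinset_eq key (Finset.univ \ S)
  have hmem₁ : ∀ x, x ∈ l₁ ↔ x ∈ S := fun x => by rw [← hl₁, List.mem_toFinset]
  have hmem₂ : ∀ x, x ∈ l₂ ↔ x ∉ S := fun x => by simp [← List.mem_toFinset, hl₂]
  have hrun₂ : stepDownRun xbar key l₂ = ∅ := by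
    cases l₂ with
    | nil => rfl
    | cons h q =>
      rw [stepDownRun, if_pos]
      rw [← List.toFinset_cons, hl₂]
      exact h_fail h (by simpa using (hmem₂ h).mp List.mem_cons_self)
  refine ⟨l₁ ++ l₂, ⟨?_, fun i => ?_, ?_⟩, ?_⟩
  · exact List.nodup_append.mpr ⟨hnodup₁, hnodup₂, fun x hx y hy hxy =>
      (hmem₂ y).mp hy (hxy ▸ (hmem₁ x).mp hx)⟩
  · by_cases hi : i ∈ S
    · exact List.mem_append_left _ ((hmem₁ i).mpr hi)
    · exact List.mem_append_right _ ((hmem₂ i).mpr hi)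
  · exact List.pairwise_append.mpr ⟨hsorted₁, hsorted₂, fun a ha h hh =>
      h_order a ((hmem₁ a).mp ha) h (by simpa using (hmem₂ h).mp hh)⟩
  · rw [stepDownRun_append hrun₂ ?_, hl₁]
    intro p a q hpq
    have ha : a ∈ S := (hmem₁ a).mp (by simp [hpq])
    have hq : ∀ x ∈ q, key x ≤ key a :=
      List.pairwise_cons.mp (List.pairwise_append.mp (hpq ▸ hsorted₁)).2.1 |>.1
    refine (hmono fun x hx => ?_).trans (h_pass a ha)
    simp only [List.toFinset_append, Finset.mem_insert, Finset.mem_union,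
      List.mem_toFinset] at hx
    rcases hx with rfl | hx | hx
    · simp [ha]
    · simp [(hmem₁ x).mp (by simp [hpq, hx]), hq x hx]
    · simp [(hmem₂ x).mp hx]

theorem exists_sortedEnum_stepDownRun_eq_iff (hmono : Monotone xbar) (S : Finset (Fin m)) :
    (∃ l, SortedEnum key l ∧ stepDownRun xbar key l = S) ↔
      IsStepDownSelection xbar key Finset.univ S := by
  refine ⟨?_, exists_sortedEnum_stepDownRun_eq_of_isStepDownSelection hmono⟩
  rintro ⟨l, ⟨hnodup, hall, hsorted⟩, rfl⟩
  have hl : l.toFinset = Finset.univ := Finset.eq_univ_of_forall (by simpa using hall)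
  exact hl ▸ isStepDownSelection_stepDownRun hmono hsorted hnodup

end StepDown

section RealLine

open Set Bornology

theorem Set.OrdConnected.subset_Iio {α : Type*} [LinearOrder α] {s : Set α} {x y : α}
    (hs : s.OrdConnected) (hx : x ∉ s) (hy : y ∈ s) (hyx : y < x) : s ⊆ Iio x :=
  fun _ hz => not_le.mp fun hxz => hx (hs.out hy hz ⟨hyx.le, hxz⟩)

theorem Set.OrdConnected.subset_Ioi {α : Type*} [LinearOrder α] {s : Set α} {x y : α}
    (hs : s.OrdConnected) (hx : x ∉ s) (hy : y ∈ s) (hxy : x < y) : s ⊆ Ioi x :=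
  fun _ hz => not_le.mp fun hzx => hx (hs.out hz hy ⟨hzx, hxy.le⟩)

theorem Finset.exists_biInter_eq_inter_of_ordConnected {α ι : Type*} [LinearOrder α]
    {T : Finset ι} (hT : T.Nonempty) {I : ι → Set α} (hI : ∀ i, (I i).OrdConnected) :
    ∃ b ∈ T, ∃ e ∈ T, ⋂ d ∈ T, I d = I b ∩ I e := by
  -- In a linear order upper (lower) closures are nested: take the smallest of each kind.
  obtain ⟨b, hb, hb_max⟩ := T.exists_max_image (fun d => upperClosure (I d)) hT
  obtain ⟨e, he, he_min⟩ := T.exists_min_image (fun d => lowerClosure (I d)) hT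
  refine ⟨b, hb, e, he, Set.Subset.antisymm
    (Set.subset_inter (biInter_subset_of_mem hb) (biInter_subset_of_mem he)) ?_⟩
  rintro t ⟨htb, hte⟩
  refine mem_iInter₂.mpr fun d hd => ?_
  obtain ⟨x, hx, hxt⟩ :=
    mem_upperClosure.mp (UpperSet.coe_subset_coe.mpr (hb_max d hd) (subset_upperClosure htb))
  obtain ⟨y, hy, hty⟩ :=
    mem_lowerClosure.mp (LowerSet.coe_subset_coe.mpr (he_min d hd) (subset_lowerClosure hte))
  exact (hI d).out hx hy ⟨hxt, hty⟩

section LabelledGaps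

variable {X : Set ℝ} {ι Λ : Type*} [Fintype Λ] (W : ι → Set ℝ) (label : ι → Λ)

open Classical in
noncomputable def labelsLeftOf (t : ℝ) : Finset Λ :=
  Finset.univ.filter fun l => ∀ i, label i = l → W i ⊆ Iio t

theorem mem_labelsLeftOf {t : ℝ} {l : Λ} :
    l ∈ labelsLeftOf W label t ↔ ∀ i, label i = l → W i ⊆ Iio t := by
  simp [labelsLeftOf]

theorem labelsLeftOf_mono : Monotone (labelsLeftOf W label) := fun _ _ htt' _ hl =>
  (mem_labelsLeftOf W label).mpr fun i hi =>
    ((mem_labelsLeftOf W label).mp hl i hi).trans (Iio_subset_Iio htt')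

variable {W label}

theorem Icc_subset_of_labelsLeftOf_subset (hWX : ∀ i, Disjoint (W i) X)
    (hlabel : ∀ i j, label i = label j → (W i).Nonempty → (W j).Nonempty →
      IsBounded (W i) → (W i ∪ W j).OrdConnected)
    (hcover : ∀ t ∉ X, ∃ R : Set ℝ, R.OrdConnected ∧ Disjoint R X ∧ t ∈ R ∧
      (¬IsBounded R ∨ ∃ i, R = W i))
    {t t' : ℝ} (ht : t ∈ X) (ht' : t' ∈ X)
    (hsub : labelsLeftOf W label t' ⊆ labelsLeftOf W label t) : Icc t t' ⊆ X := by
  intro u hu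
  by_contra huX
  obtain ⟨R, hR, hRX, huR, hRW⟩ := hcover u huX
  have htR : t ∉ R := disjoint_right.mp hRX ht
  have ht'R : t' ∉ R := disjoint_right.mp hRX ht'
  have htu : t < u := hu.1.lt_of_ne (by rintro rfl; exact htR huR)
  have hut' : u < t' := hu.2.lt_of_ne (by rintro rfl; exact ht'R huR)
  have hRb : IsBounded R := (Metric.isBounded_Ioo t t').subset fun v hv =>
    ⟨hR.subset_Ioi htR huR htu hv, hR.subset_Iio ht'R huR hut' hv⟩
  obtain ⟨i, rfl⟩ := hRW.resolve_left (not_not.mpr hRb)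
  have h_right : label i ∈ labelsLeftOf W label t' := by
    refine (mem_labelsLeftOf W label).mpr fun j hj => ?_
    rcases (W j).eq_empty_or_nonempty with hj0 | hjne
    · simp [hj0]
    have ht'U : t' ∉ W i ∪ W j := fun h => h.elim ht'R (disjoint_right.mp (hWX j) ht')
    exact subset_union_right.trans
      ((hlabel i j hj.symm ⟨u, huR⟩ hjne hRb).subset_Iio ht'U (Or.inl huR) hut')
  have h_left : label i ∉ labelsLeftOf W label t := fun h =>
    ((mem_labelsLeftOf W label).mp h i rfl huR).not_gt htu
  exact h_left (hsub h_right)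

theorem exists_eq_iUnion_ordConnected_of_labelled_gaps (hWX : ∀ i, Disjoint (W i) X)
    (hlabel : ∀ i j, label i = label j → (W i).Nonempty → (W j).Nonempty →
      IsBounded (W i) → (W i ∪ W j).OrdConnected)
    (hcover : ∀ t ∉ X, ∃ R : Set ℝ, R.OrdConnected ∧ Disjoint R X ∧ t ∈ R ∧
      (¬IsBounded R ∨ ∃ i, R = W i)) :
    ∃ P : Fin (Fintype.card Λ + 1) → Set ℝ, (∀ k, (P k).OrdConnected) ∧
      X = ⋃ k, P k := by
  refine ⟨fun k => {t ∈ X | (labelsLeftOf W label t).card = k}, fun k => ⟨?_⟩, ?_⟩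
  · rintro t ⟨ht, htk⟩ t' ⟨ht', ht'k⟩ u hu
    have heq : labelsLeftOf W label t = labelsLeftOf W label t' :=
      Finset.eq_of_subset_of_card_le (labelsLeftOf_mono W label (hu.1.trans hu.2))
        (by rw [htk, ht'k])
    have hu_eq : labelsLeftOf W label u = labelsLeftOf W label t :=
      le_antisymm (heq ▸ labelsLeftOf_mono W label hu.2) (labelsLeftOf_mono W label hu.1)
    exact ⟨Icc_subset_of_labelsLeftOf_subset hWX hlabel hcover ht ht' heq.ge hu,
      by rw [hu_eq, htk]⟩
  · ext t
    simp only [mem_iUnion, mem_ofPred_eq]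
    exact ⟨fun ht => ⟨⟨_, Nat.lt_succ_of_le (Finset.card_le_univ (labelsLeftOf W label t))⟩,
      ht, rfl⟩, fun ⟨_, ht, _⟩ => ht⟩

end LabelledGaps

theorem IsClosed.connectedComponentIn {α : Type*} [TopologicalSpace α] {F : Set α}
    (hF : IsClosed F) (x : α) : IsClosed (connectedComponentIn F x) := by
  by_cases hx : x ∈ F
  · refine closure_subset_iff_isClosed.mp (isPreconnected_connectedComponentIn.closure
      |>.subset_connectedComponentIn (subset_closure (mem_connectedComponentIn hx)) ?_)
    exact closure_minimal (connectedComponentIn_subset F x) hF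
  · rw [connectedComponentIn_eq_empty hx]
    exact isClosed_empty

theorem biUnion_connectedComponentIn_eq_of_isPreconnected {α : Type*} [TopologicalSpace α]
    {F J : Set α} (hJ : IsPreconnected J) (hJF : J ⊆ F) {z : α}
    (hz : z ∈ ⋃ x ∈ J, connectedComponentIn F x) :
    ⋃ x ∈ J, connectedComponentIn F x = connectedComponentIn F z := by
  obtain ⟨x, hx, hzx⟩ := mem_iUnion₂.mp hz
  rw [← connectedComponentIn_eq hzx]
  refine Subset.antisymm (iUnion₂_subset fun y hy => ?_) (subset_biUnion_of_mem hx)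
  exact (connectedComponentIn_eq (hJ.subset_connectedComponentIn hx hJF hy)).symm.le

theorem Finset.exists_pairwise_disjoint_enum {α : Type*} (𝒞 : Finset (Set α))
    (h𝒞 : (𝒞 : Set (Set α)).Pairwise Disjoint) :
    ∃ I : Fin 𝒞.card → Set α, (∀ k, I k ∈ 𝒞) ∧
      Pairwise (fun k k' => Disjoint (I k) (I k')) ∧ ⋃ k, I k = ⋃ D ∈ 𝒞, D := by
  refine ⟨fun k => 𝒞.equivFin.symm k, fun k => (𝒞.equivFin.symm k).2,
    fun k k' hkk' => h𝒞 (𝒞.equivFin.symm k).2 (𝒞.equivFin.symm k').2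
      fun h => hkk' (𝒞.equivFin.symm.injective (Subtype.ext h)), ?_⟩
  ext x
  simp only [mem_iUnion, exists_prop]
  exact ⟨fun ⟨k, hk⟩ => ⟨_, (𝒞.equivFin.symm k).2, hk⟩,
    fun ⟨D, hD, hx⟩ => ⟨𝒞.equivFin ⟨D, hD⟩, by simpa using hx⟩⟩

theorem exists_pairwise_disjoint_isClosed_isPreconnected_eq_iUnion {α : Type*}
    [TopologicalSpace α] {n : ℕ} (J : Fin n → Set α) (hJc : ∀ k, IsClosed (J k))
    (hJ : ∀ k, IsPreconnected (J k)) :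
    ∃ n' ≤ n, ∃ I : Fin n' → Set α, (∀ k, IsClosed (I k) ∧ IsPreconnected (I k)) ∧
      Pairwise (fun k k' => Disjoint (I k) (I k')) ∧ ⋃ k, J k = ⋃ k, I k := by
  classical
  set F := ⋃ k, J k
  let C (k : Fin n) : Set α := ⋃ x ∈ J k, connectedComponentIn F x
  have hC : ∀ k, ∀ z ∈ C k, C k = connectedComponentIn F z := fun k _ hz =>
    biUnion_connectedComponentIn_eq_of_isPreconnected (hJ k) (subset_iUnion J k) hz
  have hC_disj : (↑(Finset.univ.image C) : Set (Set α)).Pairwise Disjoint := by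
    simp only [Finset.coe_image, Finset.coe_univ, image_univ]
    rintro _ ⟨j, rfl⟩ _ ⟨j', rfl⟩ hne
    exact disjoint_left.mpr fun z hz hz' => hne (by rw [hC j z hz, hC j' z hz'])
  obtain ⟨I, hI𝒞, hIdisj, hIunion⟩ :=
    (Finset.univ.image C).exists_pairwise_disjoint_enum hC_disj
  refine ⟨_, Finset.card_image_le.trans (by simp), I, fun k => ?_, hIdisj, ?_⟩
  · obtain ⟨j, -, hj⟩ := Finset.mem_image.mp (hI𝒞 k)
    rw [← hj]
    rcases (C j).eq_empty_or_nonempty with h0 | ⟨z, hz⟩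
    · rw [h0]
      exact ⟨isClosed_empty, isPreconnected_empty⟩
    · rw [hC j z hz]
      exact ⟨(isClosed_iUnion_of_finite hJc).connectedComponentIn z,
        isPreconnected_connectedComponentIn⟩
  · rw [hIunion]
    simp only [Finset.set_biUnion_finset_image, Finset.mem_univ, iUnion_true]
    refine Subset.antisymm (iUnion_mono fun k x hx => mem_biUnion hx ?_)
      (iUnion_subset fun k => iUnion₂_subset fun x _ => connectedComponentIn_subset F x)
    exact mem_connectedComponentIn (mem_iUnion_of_mem k hx)

theorem exists_disjoint_closed_intervals_eq_closure_iUnion {n : ℕ} (P : Fin n → Set ℝ)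
    (hP : ∀ k, (P k).OrdConnected) :
    ∃ n' ≤ n, ∃ I : Fin n' → Set ℝ, (∀ k, IsClosed (I k) ∧ (I k).OrdConnected) ∧
      Pairwise (fun k k' => Disjoint (I k) (I k')) ∧ closure (⋃ k, P k) = ⋃ k, I k := by
  obtain ⟨n', hn', I, hI, hdisj, hunion⟩ :=
    exists_pairwise_disjoint_isClosed_isPreconnected_eq_iUnion (fun k => closure (P k))
      (fun _ => isClosed_closure) fun k => (isPreconnected_iff_ordConnected.mpr (hP k)).closure
  exact ⟨n', hn', I, fun k => ⟨(hI k).1, isPreconnected_iff_ordConnected.mp (hI k).2⟩, hdisj,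
    by rw [closure_iUnion_of_finite, hunion]⟩

theorem volume_closure_iUnion_diff_eq_zero {ι : Type*} [Finite ι] (P : ι → Set ℝ)
    (hP : ∀ k, (P k).OrdConnected) : volume (closure (⋃ k, P k) \ ⋃ k, P k) = 0 := by
  rw [closure_iUnion_of_finite]
  refine measure_mono_null (fun t ht => ?_)
    (measure_iUnion_null fun k => (hP k).convex.addHaar_frontier volume)
  obtain ⟨k, hk⟩ := mem_iUnion.mp ht.1
  exact mem_iUnion.mpr ⟨k, hk, fun hint => ht.2 (mem_iUnion_of_mem k (interior_subset hint))⟩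

end RealLine

section AffineBounds

open Set Bornology

theorem ordConnected_setOf_abs_lt_affine (a b p q : ℝ) :
    {t : ℝ | |a * t + b| < p * t + q}.OrdConnected := by
  refine ⟨fun t₁ h₁ t₂ h₂ u hu => ?_⟩
  simp only [mem_ofPred_eq, abs_lt] at h₁ h₂ ⊢
  obtain ⟨hu₁, hu₂⟩ := hu
  constructor
  · rcases le_total 0 (a + p) with h | h
    · nlinarith [mul_le_mul_of_nonneg_left hu₁ h]
    · nlinarith [mul_le_mul_of_nonpos_left hu₂ h]
  · rcases le_total 0 (p - a) with h | h
    · nlinarith [mul_le_mul_of_nonneg_left hu₁ h]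
    · nlinarith [mul_le_mul_of_nonpos_left hu₂ h]

theorem not_isBounded_of_isUpperSet_or_isLowerSet {s : Set ℝ}
    (hs : IsUpperSet s ∨ IsLowerSet s) (hne : s.Nonempty) : ¬IsBounded s := fun hb =>
  hs.elim (fun h => h.not_bddAbove hne hb.bddAbove) fun h => h.not_bddBelow hne hb.bddBelow

theorem abs_lt_abs_of_isBounded_setOf_abs_lt {a b p q : ℝ}
    (hb : IsBounded {t : ℝ | |a * t + b| < p * t + q})
    (hne : {t : ℝ | |a * t + b| < p * t + q}.Nonempty) : |p| < |a| := by
  by_contra! hpa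
  refine not_isBounded_of_isUpperSet_or_isLowerSet ?_ hne hb
  have hslope : ∀ t t' : ℝ, |a * t' + b| ≤ |a * t + b| + |a| * |t' - t| := fun t t' => by
    have := abs_sub_abs_le_abs_sub (a * t' + b) (a * t + b)
    rw [show a * t' + b - (a * t + b) = a * (t' - t) by ring, abs_mul] at this
    linarith
  rcases le_total 0 p with hp | hp
  · left
    intro t t' htt' ht
    have := hslope t t'
    rw [abs_of_nonneg (sub_nonneg.2 htt')] at this
    rw [abs_of_nonneg hp] at hpa
    simp only [mem_ofPred_eq] at ht ⊢
    nlinarith [mul_le_mul_of_nonneg_right hpa (sub_nonneg.2 htt')]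
  · right
    intro t t' htt' ht
    have := hslope t t'
    rw [abs_of_nonpos (sub_nonpos.2 htt')] at this
    rw [abs_of_nonpos hp] at hpa
    simp only [mem_ofPred_eq] at ht ⊢
    nlinarith [mul_le_mul_of_nonneg_right hpa (sub_nonneg.2 htt')]

theorem abs_lt_abs_of_abs_lt_of_abs_lt_neg {a b p q t₁ t₂ : ℝ}
    (h₁ : |a * t₁ + b| < p * t₁ + q) (h₂ : |a * t₂ + b| < -(p * t₂ + q)) :
    |a| < |p| := by
  have h := abs_sub (a * t₁ + b) (a * t₂ + b)
  rw [show a * t₁ + b - (a * t₂ + b) = a * (t₁ - t₂) by ring, abs_mul] at h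
  have hp : p * (t₁ - t₂) ≤ |p| * |t₁ - t₂| := by rw [← abs_mul]; exact le_abs_self _
  exact lt_of_mul_lt_mul_right (by linarith) (abs_nonneg (t₁ - t₂))

theorem isUpperSet_or_isLowerSet_setOf_le_affine (p q r : ℝ) :
    IsUpperSet {t : ℝ | r ≤ p * t + q} ∨ IsLowerSet {t : ℝ | r ≤ p * t + q} := by
  rcases le_total 0 p with hp | hp
  · exact Or.inl fun t t' htt' (ht : r ≤ _) =>
      show r ≤ _ by nlinarith [mul_le_mul_of_nonneg_left htt' hp]
  · exact Or.inr fun t t' htt' (ht : r ≤ _) =>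
      show r ≤ _ by nlinarith [mul_le_mul_of_nonpos_left htt' hp]

theorem exists_abs_eq_one_and_abs_eq_mul (r : ℝ) : ∃ σ : ℝ, |σ| = 1 ∧ |r| = σ * r := by
  rcases le_total 0 r with hr | hr
  · exact ⟨1, abs_one, by rw [abs_of_nonneg hr, one_mul]⟩
  · exact ⟨-1, by simp, by rw [abs_of_nonpos hr, neg_one_mul]⟩

theorem mul_le_abs_of_abs_eq_one {σ : ℝ} (hσ : |σ| = 1) (r : ℝ) : σ * r ≤ |r| := by
  simpa [abs_mul, hσ] using le_abs_self (σ * r)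

end AffineBounds

section GapPieces

open Set Bornology

variable (c w : Fin m → ℝ) (xbar : Finset (Fin m) → ℝ) (S : Finset (Fin m))

def stepDownSet : Set ℝ :=
  {t | IsStepDownSelection xbar (fun d => |c d * t + w d|) Finset.univ S}

def slab (d : Fin m) (θ : ℝ) : Set ℝ := {t | |c d * t + w d| < θ}

inductive GapPiece (n : ℕ)
  | outranked (a h : Fin n) (ε : ℝ)
  | block (T : Finset (Fin n)) (b e : Fin n)

def GapPiece.label : GapPiece m → Sym2 (Fin m)
  | .outranked a h _ => s(a, h)
  | .block _ b e => s(b, e)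

/-- The intervals where a selected `a` is beaten by an unselected `h` (`outranked`, with the sign
`ε = ±1` of `x_h`), and where all of `T ⊆ S` stay below `x̄(T ∪ Sᶜ)` (`block`, when this set is
cut out by the slabs of `b` and `e` alone). -/
def gapPiece : GapPiece m → Set ℝ
  | .outranked a h ε =>
      {t | a ∈ S ∧ h ∉ S ∧ |ε| = 1 ∧ |c a * t + w a| < ε * c h * t + ε * w h}
  | .block T b e =>
      let θ := xbar (T ∪ (Finset.univ \ S))
      {t | T ⊆ S ∧ b ∈ T ∧ e ∈ T ∧
        ⋂ d ∈ T, slab c w d θ = slab c w b θ ∩ slab c w e θ ∧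
        t ∈ slab c w b θ ∩ slab c w e θ}

theorem ordConnected_slab (d : Fin m) (θ : ℝ) : (slab c w d θ).OrdConnected := by
  simpa [slab] using ordConnected_setOf_abs_lt_affine (c d) (w d) 0 θ

theorem slab_mono (d : Fin m) : Monotone (slab c w d) :=
  fun _ _ hθ _ ht => lt_of_lt_of_le ht hθ

theorem ordConnected_gapPiece : ∀ i, (gapPiece c w xbar S i).OrdConnected
  | .outranked _ _ _ => ⟨fun _ h₁ _ h₂ _ hu => ⟨h₁.1, h₁.2.1, h₁.2.2.1,
      (ordConnected_setOf_abs_lt_affine _ _ _ _).out h₁.2.2.2 h₂.2.2.2 hu⟩⟩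
  | .block _ b e => ⟨fun _ h₁ _ h₂ _ hu => ⟨h₁.1, h₁.2.1, h₁.2.2.1, h₁.2.2.2.1,
      ((ordConnected_slab c w b _).inter (ordConnected_slab c w e _)).out
        h₁.2.2.2.2 h₂.2.2.2.2 hu⟩⟩

variable {xbar}

theorem disjoint_gapPiece (hmono : Monotone xbar) :
    ∀ i, Disjoint (gapPiece c w xbar S i) (stepDownSet c w xbar S)
  | .outranked a h ε => disjoint_left.mpr fun t ⟨ha, hh, hε, hlt⟩ hX => by
      have hle := hX.2.1 a ha h (by simpa using hh)
      have := mul_le_abs_of_abs_eq_one hε (c h * t + w h)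
      linarith [show ε * (c h * t + w h) = ε * c h * t + ε * w h by ring]
  | .block T b e => disjoint_left.mpr fun t ⟨hTS, hb, _, hTbe, ht⟩ hX => by
      have hT : ∀ d ∈ T, |c d * t + w d| < xbar (T ∪ (Finset.univ \ S)) :=
        fun d hd => mem_iInter₂.mp (hTbe ▸ ht) d hd
      obtain ⟨a, ha, hmax⟩ := T.exists_max_image (fun d => |c d * t + w d|) ⟨b, hb⟩
      refine (hT a ha).not_ge ((hmono ?_).trans (hX.2.2.1 a (hTS ha)))
      exact Finset.union_subset_union (fun d hd => Finset.mem_filter.mpr ⟨hTS hd, hmax d hd⟩)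
        subset_rfl

theorem gapPiece_block_eq_of_nonempty {T : Finset (Fin m)} {b e : Fin m}
    (hne : (gapPiece c w xbar S (.block T b e)).Nonempty) :
    gapPiece c w xbar S (.block T b e) =
      slab c w b (xbar (T ∪ (Finset.univ \ S))) ∩
        slab c w e (xbar (T ∪ (Finset.univ \ S))) := by
  obtain ⟨_, hTS, hb, he, hTbe, -⟩ := hne
  ext t
  exact ⟨fun ht => ht.2.2.2.2, fun ht => ⟨hTS, hb, he, hTbe, ht⟩⟩

theorem ordConnected_slab_inter_union_slab_inter (b e : Fin m) (θ θ' : ℝ) :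
    (slab c w b θ ∩ slab c w e θ ∪ slab c w b θ' ∩ slab c w e θ').OrdConnected := by
  rcases le_total θ θ' with hθ | hθ
  · rw [union_eq_right.mpr (inter_subset_inter (slab_mono c w b hθ) (slab_mono c w e hθ))]
    exact (ordConnected_slab c w b θ').inter (ordConnected_slab c w e θ')
  · rw [union_eq_left.mpr (inter_subset_inter (slab_mono c w b hθ) (slab_mono c w e hθ))]
    exact (ordConnected_slab c w b θ).inter (ordConnected_slab c w e θ)

theorem ordConnected_gapPiece_union {i j : GapPiece m} (hij : i.label = j.label)
    (hi : (gapPiece c w xbar S i).Nonempty) (hj : (gapPiece c w xbar S j).Nonempty)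
    (hib : IsBounded (gapPiece c w xbar S i)) :
    (gapPiece c w xbar S i ∪ gapPiece c w xbar S j).OrdConnected := by
  rcases i with ⟨a, h, ε⟩ | ⟨T, b, e⟩ <;> rcases j with ⟨a', h', ε'⟩ | ⟨T', b', e'⟩
    <;> simp only [GapPiece.label] at hij
  · obtain ⟨t₁, ha, hh, hε, h₁⟩ := hi
    obtain ⟨t₂, ha', hh', hε', h₂⟩ := hj
    rcases Sym2.eq_iff.mp hij with ⟨rfl, rfl⟩ | ⟨rfl, -⟩
    · rcases abs_eq_abs.mp (hε'.trans hε.symm) with rfl | rfl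
      · rw [union_self]
        exact ordConnected_gapPiece c w xbar S _
      · -- boundedness forces `|ε c h| < |c a|`, the two opposite signs force the reverse
        have hbdd : IsBounded {t | |c a * t + w a| < ε * c h * t + ε * w h} :=
          hib.subset fun t ht => ⟨ha, hh, hε, ht⟩
        exact absurd (abs_lt_abs_of_isBounded_setOf_abs_lt hbdd ⟨t₁, h₁⟩)
          (abs_lt_abs_of_abs_lt_of_abs_lt_neg h₁ (h₂.trans_eq (by ring))).not_gt
    · exact absurd ha hh'
  · obtain ⟨_, -, hh, -⟩ := hi
    obtain ⟨_, hTS, hb, he, -⟩ := hj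
    rcases Sym2.mem_iff.mp (hij ▸ Sym2.mem_mk_right a h) with rfl | rfl
    exacts [absurd (hTS hb) hh, absurd (hTS he) hh]
  · obtain ⟨_, hTS, hb, he, -⟩ := hi
    obtain ⟨_, -, hh', -⟩ := hj
    rcases Sym2.mem_iff.mp (hij.symm ▸ Sym2.mem_mk_right a' h') with rfl | rfl
    exacts [absurd (hTS hb) hh', absurd (hTS he) hh']
  · rw [gapPiece_block_eq_of_nonempty c w S hi, gapPiece_block_eq_of_nonempty c w S hj]
    rcases Sym2.eq_iff.mp hij with ⟨rfl, rfl⟩ | ⟨rfl, rfl⟩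
    · exact ordConnected_slab_inter_union_slab_inter c w b e _ _
    · rw [inter_comm (slab c w e _)]
      exact ordConnected_slab_inter_union_slab_inter c w b e _ _

theorem exists_unbounded_of_threshold_le_abs {h : Fin m} (hh : h ∈ Finset.univ \ S)
    {t : ℝ} (ht : xbar (Finset.univ \ S) ≤ |c h * t + w h|) :
    ∃ R : Set ℝ, R.OrdConnected ∧ Disjoint R (stepDownSet c w xbar S) ∧ t ∈ R ∧
      ¬IsBounded R := by
  obtain ⟨σ, hσ, hσt⟩ := exists_abs_eq_one_and_abs_eq_mul (c h * t + w h)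
  have hray :=
    isUpperSet_or_isLowerSet_setOf_le_affine (σ * c h) (σ * w h) (xbar (Finset.univ \ S))
  have htR : t ∈ {u | xbar (Finset.univ \ S) ≤ σ * c h * u + σ * w h} := by
    rw [mem_ofPred_eq]
    linarith [show σ * (c h * t + w h) = σ * c h * t + σ * w h by ring]
  refine ⟨_, hray.elim IsUpperSet.ordConnected IsLowerSet.ordConnected,
    disjoint_left.mpr fun u hu hX => ?_, htR,
    not_isBounded_of_isUpperSet_or_isLowerSet hray ⟨t, htR⟩⟩
  have := mul_le_abs_of_abs_eq_one hσ (c h * u + w h)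
  linarith [Set.mem_ofPred.mp hu, hX.2.2.2 h hh,
    show σ * (c h * u + w h) = σ * c h * u + σ * w h by ring]

theorem exists_mem_gapPiece_or_threshold_le_abs {t : ℝ} (ht : t ∉ stepDownSet c w xbar S) :
    (∃ i, t ∈ gapPiece c w xbar S i) ∨
      ∃ h ∈ Finset.univ \ S, xbar (Finset.univ \ S) ≤ |c h * t + w h| := by
  by_cases h_order : ∀ a ∈ S, ∀ h ∈ Finset.univ \ S, |c h * t + w h| ≤ |c a * t + w a|
  · by_cases h_pass : ∀ a ∈ S, xbar ({b ∈ S | |c b * t + w b| ≤ |c a * t + w a|} ∪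
        (Finset.univ \ S)) ≤ |c a * t + w a|
    · right
      by_contra! h_fail
      exact ht ⟨Finset.subset_univ S, h_order, h_pass, h_fail⟩
    · push Not at h_pass
      obtain ⟨a, ha, hlt⟩ := h_pass
      set T : Finset (Fin m) := {b ∈ S | |c b * t + w b| ≤ |c a * t + w a|}
      set θ := xbar (T ∪ (Finset.univ \ S))
      obtain ⟨b, hb, e, he, hbe⟩ := Finset.exists_biInter_eq_inter_of_ordConnected (T := T)
        ⟨a, Finset.mem_filter.mpr ⟨ha, le_rfl⟩⟩ fun d => ordConnected_slab c w d θ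
      have htT : t ∈ ⋂ d ∈ T, slab c w d θ :=
        mem_iInter₂.mpr fun d hd => lt_of_le_of_lt (Finset.mem_filter.mp hd).2 hlt
      exact Or.inl ⟨.block T b e, Finset.filter_subset _ _, hb, he, hbe, hbe ▸ htT⟩
  · push Not at h_order
    obtain ⟨a, ha, h, hh, hlt⟩ := h_order
    obtain ⟨ε, hε, hεt⟩ := exists_abs_eq_one_and_abs_eq_mul (c h * t + w h)
    refine Or.inl ⟨.outranked a h ε, ha, (Finset.mem_sdiff.mp hh).2, hε, ?_⟩
    linarith [show ε * (c h * t + w h) = ε * c h * t + ε * w h by ring]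

theorem exists_ordConnected_gap (hmono : Monotone xbar) {t : ℝ}
    (ht : t ∉ stepDownSet c w xbar S) :
    ∃ R : Set ℝ, R.OrdConnected ∧ Disjoint R (stepDownSet c w xbar S) ∧ t ∈ R ∧
      (¬IsBounded R ∨ ∃ i, R = gapPiece c w xbar S i) := by
  rcases exists_mem_gapPiece_or_threshold_le_abs c w S ht with ⟨i, hti⟩ | ⟨h, hh, hθ⟩
  · exact ⟨_, ordConnected_gapPiece c w xbar S i, disjoint_gapPiece c w S hmono i, hti,
      Or.inr ⟨i, rfl⟩⟩
  · obtain ⟨R, hR, hRX, htR, hRb⟩ := exists_unbounded_of_threshold_le_abs c w S hh hθ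
    exact ⟨R, hR, hRX, htR, Or.inl hRb⟩

theorem exists_eq_iUnion_ordConnected_stepDownSet (hmono : Monotone xbar) :
    ∃ P : Fin (Fintype.card (Sym2 (Fin m)) + 1) → Set ℝ, (∀ k, (P k).OrdConnected) ∧
      stepDownSet c w xbar S = ⋃ k, P k :=
  exists_eq_iUnion_ordConnected_of_labelled_gaps (disjoint_gapPiece c w S hmono)
    (fun _ _ => ordConnected_gapPiece_union c w S) fun _ => exists_ordConnected_gap c w S hmono

end GapPieces

theorem condSupport_closure_union_of_intervals_general
    (V : Matrix (Fin m) (Fin m) ℝ)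
    (xbar : Finset (Fin m) → ℝ)
    (hxmono : ∀ B C : Finset (Fin m), B ⊆ C → xbar B ≤ xbar C)
    (z : Fin m → ℝ) (S : Finset (Fin m)) (s : Fin m) :
    (∃ n : ℕ, n ≤ m * (m + 1) / 2 + 1 ∧
      ∃ I : Fin n → Set ℝ,
        (∀ k, IsClosed (I k) ∧ (I k).OrdConnected) ∧
        (Pairwise fun k k' => Disjoint (I k) (I k')) ∧
        closure (condSupport xbar V z S s) = ⋃ k, I k) ∧
    volume (closure (condSupport xbar V z S s) \ condSupport xbar V z S s) = 0 := by
  have hmono : Monotone xbar := fun B C hBC => hxmono B C hBC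
  have hX : condSupport xbar V z S s = stepDownSet (fun h => corrMat V h s) z xbar S :=
    Set.ext fun _ => exists_sortedEnum_stepDownRun_eq_iff hmono S
  obtain ⟨P, hP, hXP⟩ :=
    exists_eq_iUnion_ordConnected_stepDownSet (fun h => corrMat V h s) z S hmono
  rw [hX, hXP]
  refine ⟨?_, volume_closure_iUnion_diff_eq_zero P hP⟩
  obtain ⟨n, hn, I, hI⟩ := exists_disjoint_closed_intervals_eq_closure_iUnion P hP
  refine ⟨n, hn.trans_eq ?_, I, hI⟩
  rw [Sym2.card, Fintype.card_fin, Nat.choose_two_right, Nat.add_sub_cancel, Nat.mul_comm]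

/-- **Structure of the conditional support (two-sided step-down rule).** The
closure of the conditional support `𝒳ₛ(z, S)` is a union of at most
`m(m+1)/2 + 1` pairwise disjoint closed (possibly unbounded) intervals, and
the closure differs from `𝒳ₛ(z, S)` itself by a Lebesgue-null set. -/
theorem condSupport_closure_union_of_intervals
    (hm : 0 < m)
    (V : Matrix (Fin m) (Fin m) ℝ) (hV : V.PosDef)
    (xbar : Finset (Fin m) → ℝ) (hxpos : ∀ B, 0 < xbar B)
    (hxmono : ∀ B C : Finset (Fin m), B ⊆ C → xbar B ≤ xbar C)
    (z : Fin m → ℝ) (S : Finset (Fin m)) (s : Fin m) (hs : s ∈ S) :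
    (∃ n : ℕ, n ≤ m * (m + 1) / 2 + 1 ∧
      ∃ I : Fin n → Set ℝ,
        (∀ k, IsClosed (I k) ∧ (I k).OrdConnected) ∧
        (Pairwise fun k k' => Disjoint (I k) (I k')) ∧
        closure (condSupport xbar V z S s) = ⋃ k, I k) ∧
    volume (closure (condSupport xbar V z S s) \ condSupport xbar V z S s) = 0 :=
  condSupport_closure_union_of_intervals_general V xbar hxmono z S s
end

section
/- Consider a one-sided step-down rule, a set S ⊆ {1,…,m}, s ∈ S and z ∈ ℝ^m, and define S_+ = {h ∈ S : Ω_{h,s} > 0} and S_- = {h ∈ S : Ω_{h,s} < 0}. Then the closure of the conditional support 𝒳_s(z, S) is a union of at most |S_+|·|S_-| + 1 pairwise disjoint intervals. In particular, if S_- = ∅ (no selected statistic is negatively correlated with X_s), the closure of the conditional support is a single connected interval. -/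
open MeasureTheory ProbabilityTheory Filter

variable {m : ℕ}

/-- The one-sided step-down procedure run on `x` returns exactly `S`. -/
def SelectsOneSided (xbar : Finset (Fin m) → ℝ) (x : Fin m → ℝ) (S : Finset (Fin m)) : Prop :=
  ∃ l : List (Fin m), SortedEnum x l ∧ stepDownRun xbar x l = S

/-- The conditional support `𝒳ₛ(z, S)` for the one-sided rule. -/
def condSupportOne (xbar : Finset (Fin m) → ℝ) (V : Matrix (Fin m) (Fin m) ℝ)
    (z : Fin m → ℝ) (S : Finset (Fin m)) (s : Fin m) : Set ℝ :=
  {t : ℝ | SelectsOneSided xbar (fun h => corrMat V h s * t + z h) S}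

/-!
Along the line `t ↦ Ω_{·,s} t + z` every coordinate is affine in `t`. The outcome `S` of the
step-down procedure is characterised, independently of how ties are broken, by three conditions:
selected coordinates strictly exceed the others, each selected coordinate clears the threshold of
the set of coordinates not above it, and each rejected one stays below the threshold of the
rejected set. These conditions pass from `t₁` and `t₃` to every `t₂` between them unless a
coordinate of `S₊` overtakes one of `S₋` strictly inside `(t₁, t₃)`. So the support contains the
segment between any two of its points that no crossing point `(z_q - z_p) / (Ω_{p,s} - Ω_{q,s})`,
`p ∈ S₊`, `q ∈ S₋`, separates, and these at most `|S₊|·|S₋|` points cut its closure into at most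
one more interval.
-/

open Finset

structure IsStepDownOutcome (xbar : Finset (Fin m) → ℝ) (x : Fin m → ℝ) (U S : Finset (Fin m)) :
    Prop where
  separated : ∀ h ∈ S, ∀ k ∈ U \ S, x k < x h
  accepted : ∀ h ∈ S, xbar {k ∈ U | x k ≤ x h} ≤ x h
  rejected : ∀ k ∈ U \ S, x k < xbar (U \ S)

section StepDown

variable {xbar : Finset (Fin m) → ℝ} {x : Fin m → ℝ}

theorem isStepDownOutcome_stepDownRun (hxbar : Monotone xbar) :
    ∀ {l : List (Fin m)}, l.Nodup → l.Pairwise (fun i j => x j ≤ x i) →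
      IsStepDownOutcome xbar x l.toFinset (stepDownRun xbar x l)
  | [], _, _ => by constructor <;> simp [stepDownRun]
  | a :: t, hnd, hl => by
    rw [List.nodup_cons] at hnd
    rw [List.pairwise_cons] at hl
    rw [List.toFinset_cons]
    have hle : ∀ k ∈ insert a t.toFinset, x k ≤ x a := by
      simp only [mem_insert, List.mem_toFinset, forall_eq_or_imp, le_refl, true_and]
      exact hl.1
    by_cases hfail : x a < xbar (insert a t.toFinset)
    · rw [stepDownRun, if_pos hfail]
      refine ⟨by simp, by simp, fun k hk => ?_⟩
      rw [sdiff_empty] at hk ⊢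
      exact (hle k hk).trans_lt hfail
    · rw [stepDownRun, if_neg hfail]
      have ih := isStepDownOutcome_stepDownRun hxbar hnd.2 hl.2
      set R := stepDownRun xbar x t
      have hrest : insert a t.toFinset \ insert a R = t.toFinset \ R := by
        rw [insert_sdiff_insert, sdiff_insert_of_notMem (by simpa using hnd.1)]
      have hpass : xbar (insert a t.toFinset) ≤ x a := not_lt.1 hfail
      refine ⟨fun h hh k hk => ?_, fun h hh => ?_, fun k hk => ?_⟩
      · rw [hrest] at hk
        rcases mem_insert.1 hh with rfl | hh
        · calc x k < xbar (t.toFinset \ R) := ih.rejected k hk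
            _ ≤ xbar (insert h t.toFinset) := hxbar (sdiff_subset.trans (subset_insert _ _))
            _ ≤ x h := hpass
        · exact ih.separated h hh k hk
      · by_cases hah : x a ≤ x h
        · exact (hxbar (filter_subset _ _)).trans (hpass.trans hah)
        · have hh : h ∈ R := (mem_insert.1 hh).resolve_left (by rintro rfl; exact hah le_rfl)
          rw [filter_insert, if_neg hah]
          exact ih.accepted h hh
      · rw [hrest] at hk ⊢
        exact ih.rejected k hk

theorem IsStepDownOutcome.stepDownRun_eq (hxbar : Monotone xbar) {U S : Finset (Fin m)}
    (hS : IsStepDownOutcome xbar x U S) :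
    ∀ {l : List (Fin m)}, l.Pairwise (fun i j => x j ≤ x i) → U \ S ⊆ l.toFinset →
      l.toFinset ⊆ U → stepDownRun xbar x l = S ∩ l.toFinset
  | [], _, _, _ => by simp [stepDownRun]
  | a :: t, hl, hlow, hup => by
    rw [List.pairwise_cons] at hl
    rw [List.toFinset_cons] at hlow hup ⊢
    by_cases ha : a ∈ S
    · have hpass : xbar (insert a t.toFinset) ≤ x a := by
        refine (hxbar fun k hk => mem_filter.2 ⟨hup hk, ?_⟩).trans (hS.accepted a ha)
        rcases mem_insert.1 hk with rfl | hk
        exacts [le_rfl, hl.1 k (List.mem_toFinset.1 hk)]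
      have hlow' : U \ S ⊆ t.toFinset := fun k hk =>
        (mem_insert.1 (hlow hk)).resolve_left (by rintro rfl; exact (mem_sdiff.1 hk).2 ha)
      rw [stepDownRun, if_neg (not_lt.2 hpass), inter_insert_of_mem ha,
        hS.stepDownRun_eq hxbar hl.2 hlow' ((subset_insert _ _).trans hup)]
    · have hfail : x a < xbar (insert a t.toFinset) :=
        (hS.rejected a (mem_sdiff.2 ⟨hup (mem_insert_self _ _), ha⟩)).trans_le (hxbar hlow)
      rw [stepDownRun, if_pos hfail, inter_insert_of_notMem ha, eq_comm,
        eq_empty_iff_forall_notMem]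
      intro h hh
      rw [mem_inter, List.mem_toFinset] at hh
      exact (hl.1 h hh.2).not_gt
        (hS.separated h hh.1 a (mem_sdiff.2 ⟨hup (mem_insert_self _ _), ha⟩))

theorem exists_sortedEnum (key : Fin m → ℝ) : ∃ l, SortedEnum key l := by
  let r : Fin m → Fin m → Prop := fun i j => key j ≤ key i
  have : Std.Total r := ⟨fun i j => le_total (key j) (key i)⟩
  have : IsTrans (Fin m) r := ⟨fun _ _ _ hij hjk => hjk.trans hij⟩
  have hperm := List.perm_insertionSort r (List.finRange m)
  exact ⟨_, hperm.nodup_iff.2 (List.nodup_finRange m),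
    fun i => hperm.mem_iff.2 (List.mem_finRange i), List.pairwise_insertionSort r _⟩

theorem selectsOneSided_iff (hxbar : Monotone xbar) {S : Finset (Fin m)} :
    SelectsOneSided xbar x S ↔ IsStepDownOutcome xbar x univ S := by
  have huniv : ∀ {l : List (Fin m)}, (∀ i, i ∈ l) → l.toFinset = univ := fun hl =>
    eq_univ_of_forall fun i => List.mem_toFinset.2 (hl i)
  constructor
  · rintro ⟨l, ⟨hnd, hall, hl⟩, rfl⟩
    simpa only [huniv hall] using isStepDownOutcome_stepDownRun hxbar hnd hl
  · intro hS
    obtain ⟨l, hnd, hall, hl⟩ := exists_sortedEnum x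
    refine ⟨l, ⟨hnd, hall, hl⟩, ?_⟩
    rw [hS.stepDownRun_eq hxbar hl (by simp [huniv hall]) (by simp), huniv hall, inter_univ]

end StepDown

section Interpolation

variable {xbar : Finset (Fin m) → ℝ} {U S : Finset (Fin m)}

theorem IsStepDownOutcome.accepted_of_witness (hxbar : Monotone xbar) {x y : Fin m → ℝ}
    (hx : IsStepDownOutcome xbar x U S) {g h : Fin m} (hg : g ∈ S) (hgh : y g ≤ y h)
    (hxy : x g ≤ y g) (hmax : ∀ k ∈ S, y k ≤ y h → x k ≤ x g) :
    xbar {k ∈ U | y k ≤ y h} ≤ y h := by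
  have hsub : {k ∈ U | y k ≤ y h} ⊆ {k ∈ U | x k ≤ x g} := by
    refine monotone_filter_right U fun k hk hkh => ?_
    by_cases hkS : k ∈ S
    · exact hmax k hkS hkh
    · exact (hx.separated g hg k (mem_sdiff.2 ⟨hk, hkS⟩)).le
  calc xbar {k ∈ U | y k ≤ y h} ≤ xbar {k ∈ U | x k ≤ x g} := hxbar hsub
    _ ≤ x g := hx.accepted g hg
    _ ≤ y h := hxy.trans hgh

theorem affine_lt_of_lt_of_lt {a b c d t₁ t₂ t₃ : ℝ} (h₁₂ : t₁ ≤ t₂) (h₂₃ : t₂ ≤ t₃)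
    (h₁ : a * t₁ + b < c * t₁ + d) (h₃ : a * t₃ + b < c * t₃ + d) :
    a * t₂ + b < c * t₂ + d := by
  rcases le_total a c with hac | hac
  · nlinarith [mul_le_mul_of_nonneg_left h₁₂ (sub_nonneg.2 hac)]
  · nlinarith [mul_le_mul_of_nonneg_left h₂₃ (sub_nonneg.2 hac)]

theorem IsStepDownOutcome.of_between (hxbar : Monotone xbar) {a z : Fin m → ℝ}
    {t₁ t₂ t₃ : ℝ} (h₁₂ : t₁ ≤ t₂) (h₂₃ : t₂ ≤ t₃)
    (hcross : ∀ p ∈ S, ∀ q ∈ S, 0 < a p → a q < 0 →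
      a q * t₁ + z q ≤ a p * t₁ + z p ∨ a p * t₃ + z p ≤ a q * t₃ + z q)
    (h₁ : IsStepDownOutcome xbar (fun h => a h * t₁ + z h) U S)
    (h₃ : IsStepDownOutcome xbar (fun h => a h * t₃ + z h) U S) :
    IsStepDownOutcome xbar (fun h => a h * t₂ + z h) U S := by
  refine ⟨fun h hh k hk => affine_lt_of_lt_of_lt h₁₂ h₂₃ (h₁.separated h hh k hk)
    (h₃.separated h hh k hk), fun h hh => ?_, fun k hk => ?_⟩
  · set M := {k ∈ S | a k * t₂ + z k ≤ a h * t₂ + z h}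
    have hM : M.Nonempty := ⟨h, mem_filter.2 ⟨hh, le_rfl⟩⟩
    obtain ⟨g₁, hg₁, hmax₁⟩ := M.exists_max_image (fun k => a k * t₁ + z k) hM
    obtain ⟨g₃, hg₃, hmax₃⟩ := M.exists_max_image (fun k => a k * t₃ + z k) hM
    have via₁ : ∀ g ∈ M, 0 ≤ a g → (∀ k ∈ M, a k * t₁ + z k ≤ a g * t₁ + z g) →
        xbar {k ∈ U | a k * t₂ + z k ≤ a h * t₂ + z h} ≤ a h * t₂ + z h :=
      fun g hg ha hmax => h₁.accepted_of_witness hxbar (mem_filter.1 hg).1 (mem_filter.1 hg).2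
        (by nlinarith) fun k hk hkh => hmax k (mem_filter.2 ⟨hk, hkh⟩)
    have via₃ : ∀ g ∈ M, a g ≤ 0 → (∀ k ∈ M, a k * t₃ + z k ≤ a g * t₃ + z g) →
        xbar {k ∈ U | a k * t₂ + z k ≤ a h * t₂ + z h} ≤ a h * t₂ + z h :=
      fun g hg ha hmax => h₃.accepted_of_witness hxbar (mem_filter.1 hg).1 (mem_filter.1 hg).2
        (by nlinarith) fun k hk hkh => hmax k (mem_filter.2 ⟨hk, hkh⟩)
    rcases le_or_gt 0 (a g₁) with ha₁ | ha₁
    · exact via₁ g₁ hg₁ ha₁ hmax₁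
    rcases le_or_gt (a g₃) 0 with ha₃ | ha₃
    · exact via₃ g₃ hg₃ ha₃ hmax₃
    -- `g₃` rises and `g₁` falls; since they do not cross strictly inside `[t₁, t₃]`, either `g₃`
    -- is also maximal at `t₁` or `g₁` is also maximal at `t₃`.
    rcases hcross g₃ (mem_filter.1 hg₃).1 g₁ (mem_filter.1 hg₁).1 ha₃ ha₁ with h | h
    · exact via₁ g₃ hg₃ ha₃.le fun k hk => (hmax₁ k hk).trans h
    · exact via₃ g₁ hg₁ ha₁.le fun k hk => (hmax₃ k hk).trans h
  · simpa using affine_lt_of_lt_of_lt (c := 0) h₁₂ h₂₃ (by simpa using h₁.rejected k hk)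
      (by simpa using h₃.rejected k hk)

end Interpolation

theorem Set.OrdConnected.diff_of_subset_lowerBounds {α : Type*} [PartialOrder α] {s t : Set α}
    (hs : s.OrdConnected) (ht : t ⊆ lowerBounds s) : (s \ t).OrdConnected := by
  refine ⟨fun x hx y hy z hz => ⟨hs.out hx.1 hy.1 hz, fun hzt => hx.2 ?_⟩⟩
  have hzx : z = x := le_antisymm (ht hzt hx.1) hz.1
  rwa [hzx] at hzt

theorem ordConnected_disjointed {α ι : Type*} [PartialOrder α] [Preorder ι]
    [LocallyFiniteOrderBot ι] {A : ι → Set α} (hA : ∀ i, (A i).OrdConnected)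
    (hlt : ∀ i j, i < j → A i ⊆ lowerBounds (A j)) (j : ι) : (disjointed A j).OrdConnected := by
  rw [disjointed_apply, sup_set_eq_biUnion]
  exact (hA j).diff_of_subset_lowerBounds (Set.iUnion₂_subset fun i hi => hlt i j (mem_Iio.1 hi))

section ClosureDecomposition

variable {α : Type*} [ConditionallyCompleteLinearOrder α] [TopologicalSpace α] [OrderTopology α]
  [DenselyOrdered α]

theorem Set.OrdConnected.closure {s : Set α} (hs : s.OrdConnected) :
    (_root_.closure s).OrdConnected :=
  hs.isPreconnected.closure.ordConnected

theorem exists_ordConnected_closure_eq_iUnion {C : Set α} (P : Finset α)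
    (hC : ∀ t₁ ∈ C, ∀ t₃ ∈ C, (∀ p ∈ P, p ∉ Set.Ioo t₁ t₃) → Set.Icc t₁ t₃ ⊆ C) :
    ∃ I : Fin (#P + 1) → Set α, (∀ k, (I k).OrdConnected) ∧
      Pairwise (fun k k' => Disjoint (I k) (I k')) ∧ closure C = ⋃ k, I k := by
  classical
  -- The level sets of `φ` cut `C` into `#P + 1` order-connected pieces, ordered from left to right;
  -- their closures may share endpoints, which `disjointed` removes.
  let φ : α → ℕ := fun t => #{p ∈ P | p < t}
  have hφ_mono : Monotone φ := fun t t' htt' =>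
    card_le_card (monotone_filter_right P fun _ _ hp => hp.trans_le htt')
  have hφ_lt : ∀ p ∈ P, ∀ {t₁ t₃}, p ∈ Set.Ioo t₁ t₃ → φ t₁ < φ t₃ := fun p hp t₁ t₃ ht =>
    card_lt_card <| (ssubset_iff_of_subset (monotone_filter_right P fun _ _ hq =>
      hq.trans (ht.1.trans ht.2))).2
        ⟨p, mem_filter.2 ⟨hp, ht.2⟩, fun h => (mem_filter.1 h).2.not_gt ht.1⟩
  let A : Fin (#P + 1) → Set α := fun j => closure (C ∩ φ ⁻¹' {(j : ℕ)})
  have hA : ∀ j, (A j).OrdConnected := by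
    refine fun j => Set.OrdConnected.closure ⟨fun t₁ h₁ t₃ h₃ t ht => ⟨?_, ?_⟩⟩
    · exact hC t₁ h₁.1 t₃ h₃.1 (fun p hp hpt => (hφ_lt p hp hpt).ne (h₁.2.trans h₃.2.symm)) ht
    · exact le_antisymm (h₃.2 ▸ hφ_mono ht.2) (h₁.2 ▸ hφ_mono ht.1)
  have hlt : ∀ i j, i < j → A i ⊆ lowerBounds (A j) := by
    intro i j hij a ha b hb
    have hbase : C ∩ φ ⁻¹' {(i : ℕ)} ⊆ lowerBounds (C ∩ φ ⁻¹' {(j : ℕ)}) :=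
      fun a ha b hb => le_of_not_gt fun hba => (hφ_mono hba.le).not_gt (ha.2 ▸ hb.2 ▸ hij)
    have hub : b ∈ upperBounds (C ∩ φ ⁻¹' {(i : ℕ)}) := fun a' ha' =>
      (lowerBounds_closure (C ∩ φ ⁻¹' {(j : ℕ)}) ▸ hbase ha') hb
    exact (upperBounds_closure (C ∩ φ ⁻¹' {(i : ℕ)}) ▸ hub) ha
  refine ⟨disjointed A, ordConnected_disjointed hA hlt, disjoint_disjointed A, ?_⟩
  have hC_eq : C = ⋃ j : Fin (#P + 1), C ∩ φ ⁻¹' {(j : ℕ)} := by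
    ext t
    simp only [Set.mem_iUnion, Set.mem_inter_iff, Set.mem_preimage, Set.mem_singleton_iff]
    exact ⟨fun ht => ⟨⟨φ t, Nat.lt_succ_of_le (card_filter_le _ _)⟩, ht, rfl⟩,
      fun ⟨_, ht, _⟩ => ht⟩
  rw [iUnion_disjointed, hC_eq, closure_iUnion_of_finite]

end ClosureDecomposition

theorem div_mem_Ioo_of_crossing {a b c d t₁ t₃ : ℝ} (hca : c < a)
    (h₁ : a * t₁ + b < c * t₁ + d) (h₃ : c * t₃ + d < a * t₃ + b) :
    (d - b) / (a - c) ∈ Set.Ioo t₁ t₃ := by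
  have hac : 0 < a - c := sub_pos.2 hca
  constructor
  · rw [lt_div_iff₀ hac]
    linarith
  · rw [div_lt_iff₀ hac]
    linarith

theorem condSupportOne_closure_union_of_intervals_general
    (V : Matrix (Fin m) (Fin m) ℝ)
    (xbar : Finset (Fin m) → ℝ)
    (hxmono : ∀ B C : Finset (Fin m), B ⊆ C → xbar B ≤ xbar C)
    (z : Fin m → ℝ) (S : Finset (Fin m)) (s : Fin m) :
    (∃ n : ℕ,
      n ≤ (S.filter fun h => 0 < corrMat V h s).card *
            (S.filter fun h => corrMat V h s < 0).card + 1 ∧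
      ∃ I : Fin n → Set ℝ,
        (∀ k, (I k).OrdConnected) ∧
        (Pairwise fun k k' => Disjoint (I k) (I k')) ∧
        closure (condSupportOne xbar V z S s) = ⋃ k, I k) ∧
    ((S.filter fun h => corrMat V h s < 0) = ∅ →
      (closure (condSupportOne xbar V z S s)).OrdConnected) := by
  set C := condSupportOne xbar V z S s
  set Spos := S.filter fun h => 0 < corrMat V h s
  set Sneg := S.filter fun h => corrMat V h s < 0
  let P : Finset ℝ := (Spos ×ˢ Sneg).image fun pq =>
    (z pq.2 - z pq.1) / (corrMat V pq.1 s - corrMat V pq.2 s)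
  have hC : ∀ t₁ ∈ C, ∀ t₃ ∈ C, (∀ p ∈ P, p ∉ Set.Ioo t₁ t₃) → Set.Icc t₁ t₃ ⊆ C := by
    intro t₁ h₁ t₃ h₃ hP t₂ ht₂
    simp only [C, condSupportOne, Set.mem_ofPred_eq, selectsOneSided_iff hxmono] at h₁ h₃ ⊢
    refine h₁.of_between hxmono ht₂.1 ht₂.2 (fun p hp q hq hap haq => ?_) h₃
    by_contra! hcross
    have hpq : (p, q) ∈ Spos ×ˢ Sneg :=
      mem_product.2 ⟨mem_filter.2 ⟨hp, hap⟩, mem_filter.2 ⟨hq, haq⟩⟩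
    exact hP _ (mem_image_of_mem _ hpq)
      (div_mem_Ioo_of_crossing (haq.trans hap) hcross.1 hcross.2)
  obtain ⟨I, hI, hdisj, hcl⟩ := exists_ordConnected_closure_eq_iUnion P hC
  refine ⟨⟨#P + 1, ?_, I, hI, hdisj, hcl⟩, fun hneg => ?_⟩
  · exact Nat.succ_le_succ (card_image_le.trans (card_product _ _).le)
  · have hP : P = ∅ := by simp [P, Sneg, hneg]
    exact Set.OrdConnected.closure ⟨fun t₁ h₁ t₃ h₃ => hC t₁ h₁ t₃ h₃ (by simp [hP])⟩

/-- **Structure of the conditional support for a one-sided step-down rule.**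
With `S₊ = {h ∈ S : Ω_{h,s} > 0}` and `S₋ = {h ∈ S : Ω_{h,s} < 0}`, the closure
of the conditional support `𝒳ₛ(z, S)` is a union of at most `|S₊|·|S₋| + 1`
pairwise disjoint intervals; in particular it is a single connected interval
when `S₋ = ∅`. -/
theorem condSupportOne_closure_union_of_intervals
    (hm : 0 < m)
    (V : Matrix (Fin m) (Fin m) ℝ) (hV : V.PosDef)
    (xbar : Finset (Fin m) → ℝ) (hxpos : ∀ B, 0 < xbar B)
    (hxmono : ∀ B C : Finset (Fin m), B ⊆ C → xbar B ≤ xbar C)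
    (z : Fin m → ℝ) (S : Finset (Fin m)) (s : Fin m) (hs : s ∈ S) :
    (∃ n : ℕ,
      n ≤ (S.filter fun h => 0 < corrMat V h s).card *
            (S.filter fun h => corrMat V h s < 0).card + 1 ∧
      ∃ I : Fin n → Set ℝ,
        (∀ k, (I k).OrdConnected) ∧
        (Pairwise fun k k' => Disjoint (I k) (I k')) ∧
        closure (condSupportOne xbar V z S s) = ⋃ k, I k) ∧
    ((S.filter fun h => corrMat V h s < 0) = ∅ →
      (closure (condSupportOne xbar V z S s)).OrdConnected) :=
  condSupportOne_closure_union_of_intervals_general V xbar hxmono z S s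
end
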